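/- arXiv:1004.3131 — 2 statements merged into one kernel-verified Lean document; each statement's English description precedes it below -/
import Mathlib

section
/- Let $0=v_0<v_1<\dots$, $J_t=\max\{k:v_k\leq t\}$, and let $x:[0,\infty)\to[0,\infty)$ be right-continuous with left limits and satisfy $x_s\leq A+\sum_{k=1}^{J_s} c_k\,x_{v_k-}+g\int_0^s x_u\,du$ for all $s\leq t$, where $A,g\geq0$ and $c_k\geq0$. Then $\sup_{s\leq t}x_s\leq A\,e^{gt}\prod_{k=1}^{J_t}(1+c_k)\leq A\,e^{gt}\,e^{\sum_{k=1}^{J_t}c_k}$. -/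
open Filter Set MeasureTheory Topology

/-!
Between two consecutive jump times the hypothesis is a classical integral Grönwall inequality,
which follows from the differential Grönwall bound applied to the primitive `u ↦ ∫_a^u x`.
So on `[v_j, v_{j+1})` the function `x` grows at most like `B_j e^{g(u - v_j)}`, where `B_j`
bounds the right-hand side of the hypothesis at time `v_j`. Passing to the left limit at
`v_{j+1}` shows that the jump multiplies this bound by at most `1 + c_{j+1}`, so by induction
one can take `B_j = A e^{g v_j} ∏_{k ≤ j} (1 + c_k)`.
-/

theorem add_mul_gronwallBound_zero (K ε x : ℝ) :
    ε + K * gronwallBound 0 K ε x = ε * Real.exp (K * x) := by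
  rcases eq_or_ne K 0 with rfl | hK
  · simp [gronwallBound_K0]
  · rw [gronwallBound_of_K_ne_0 hK]
    field_simp
    ring

theorem add_mul_integral_le_mul_exp {f : ℝ → ℝ} {a b D K : ℝ} (hK : 0 ≤ K)
    (hf : IntegrableOn f (Icc a b))
    (hrc : ∀ w ∈ Ico a b, ContinuousWithinAt f (Ici w) w)
    (bound : ∀ u ∈ Ico a b, f u ≤ D + K * ∫ w in a..u, f w) :
    ∀ u ∈ Icc a b, D + K * ∫ w in a..u, f w ≤ D * Real.exp (K * (u - a)) := by
  have hF : ∀ w ∈ Ico a b, HasDerivWithinAt (fun u => ∫ w in a..u, f w) (f w) (Ici w) w := by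
    intro w hw
    have hmeas : StronglyMeasurableAtFilter f (𝓝[>] w) :=
      ⟨Ioo w b, Ioo_mem_nhdsGT hw.2,
        (hf.mono_set (Ioo_subset_Icc_self.trans (Icc_subset_Icc_left hw.1))).aestronglyMeasurable⟩
    exact intervalIntegral.integral_hasDerivWithinAt_right
      ((intervalIntegrable_iff_integrableOn_Icc_of_le hw.1).2
        (hf.mono_set (Icc_subset_Icc_right hw.2.le))) hmeas
      ((hrc w hw).mono Ioi_subset_Ici_self)
  intro u hu
  have hFc : ContinuousOn (fun u => ∫ w in a..u, f w) (Icc a b) := by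
    rw [← uIcc_of_le (hu.1.trans hu.2)] at hf ⊢
    exact intervalIntegral.continuousOn_primitive_interval hf
  have := le_gronwallBound_of_liminf_deriv_right_le hFc
    (fun w hw _ hr => (hF w hw).liminf_right_slope_le hr) intervalIntegral.integral_same.le
    (fun w hw => (bound w hw).trans_eq (add_comm _ _)) u hu
  rw [← add_mul_gronwallBound_zero]
  linarith [mul_le_mul_of_nonneg_left this hK]

theorem eq_of_isGreatest_of_le_of_lt {v : ℕ → ℝ} (hv : Monotone v) {s : ℝ} {n j : ℕ}
    (hn : IsGreatest {k | v k ≤ s} n) (hjs : v j ≤ s) (hsj : s < v (j + 1)) : n = j :=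
  le_antisymm (Nat.le_of_lt_succ (hv.reflect_lt (hn.1.trans_lt hsj))) (hn.2 hjs)

theorem lt_succ_of_isGreatest {v : ℕ → ℝ} {s : ℝ} {n : ℕ} (hn : IsGreatest {k | v k ≤ s} n) :
    s < v (n + 1) :=
  lt_of_not_ge fun h => (hn.2 h).not_gt n.lt_succ_self

section JumpGronwall

variable {v : ℕ → ℝ} {J : ℝ → ℕ} {A g t : ℝ} {c xL : ℕ → ℝ} {x : ℝ → ℝ}

theorem le_rhs_at_jump_add_integral (hv0 : v 0 = 0) (hv : Monotone v)
    (hint : ∀ p q, IntervalIntegrable x volume p q)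
    (hineq : ∀ s, 0 ≤ s → s ≤ t →
      x s ≤ A + ∑ k ∈ Finset.Icc 1 (J s), c k * xL k + g * ∫ u in (0:ℝ)..s, x u)
    {j : ℕ} {u : ℝ} (hJu : J u = j) (hju : v j ≤ u) (hut : u ≤ t) :
    x u ≤ (A + ∑ k ∈ Finset.Icc 1 j, c k * xL k + g * ∫ w in (0:ℝ)..v j, x w) +
      g * ∫ w in v j..u, x w := by
  have hu0 : 0 ≤ u := (hv0 ▸ hv j.zero_le).trans hju
  have := hineq u hu0 hut
  rw [hJu, ← intervalIntegral.integral_add_adjacent_intervals (hint 0 (v j)) (hint (v j) u)]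
    at this
  linarith

theorem add_integral_le_mul_exp_between_jumps (hv0 : v 0 = 0) (hv : Monotone v)
    (hJ : ∀ s, 0 ≤ s → IsGreatest {k | v k ≤ s} (J s)) (hg : 0 ≤ g)
    (hint : ∀ p q, IntervalIntegrable x volume p q)
    (hx_rc : ∀ s, 0 ≤ s → ContinuousWithinAt x (Ici s) s)
    (hineq : ∀ s, 0 ≤ s → s ≤ t →
      x s ≤ A + ∑ k ∈ Finset.Icc 1 (J s), c k * xL k + g * ∫ u in (0:ℝ)..s, x u)
    {j : ℕ} {b B : ℝ} (hjb : v j ≤ b) (hb : b ≤ v (j + 1)) (hbt : b ≤ t)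
    (hB : A + ∑ k ∈ Finset.Icc 1 j, c k * xL k + g * ∫ w in (0:ℝ)..v j, x w ≤ B) :
    ∀ u ∈ Icc (v j) b, B + g * ∫ w in v j..u, x w ≤ B * Real.exp (g * (u - v j)) := by
  have hv0j : 0 ≤ v j := hv0 ▸ hv j.zero_le
  refine add_mul_integral_le_mul_exp hg
    ((intervalIntegrable_iff_integrableOn_Icc_of_le hjb).1 (hint _ _))
    (fun w hw => hx_rc w (hv0j.trans hw.1)) fun u hu => ?_
  have hJu : J u = j :=
    eq_of_isGreatest_of_le_of_lt hv (hJ u (hv0j.trans hu.1)) hu.1 (hu.2.trans_le hb)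
  linarith [le_rhs_at_jump_add_integral hv0 hv hint hineq hJu hu.1 (hu.2.le.trans hbt)]

theorem le_mul_exp_between_jumps (hv0 : v 0 = 0) (hv : Monotone v)
    (hJ : ∀ s, 0 ≤ s → IsGreatest {k | v k ≤ s} (J s)) (hg : 0 ≤ g)
    (hint : ∀ p q, IntervalIntegrable x volume p q)
    (hx_rc : ∀ s, 0 ≤ s → ContinuousWithinAt x (Ici s) s)
    (hineq : ∀ s, 0 ≤ s → s ≤ t →
      x s ≤ A + ∑ k ∈ Finset.Icc 1 (J s), c k * xL k + g * ∫ u in (0:ℝ)..s, x u)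
    {j : ℕ} {u B : ℝ} (hju : v j ≤ u) (huj : u < v (j + 1)) (hut : u ≤ t)
    (hB : A + ∑ k ∈ Finset.Icc 1 j, c k * xL k + g * ∫ w in (0:ℝ)..v j, x w ≤ B) :
    x u ≤ B * Real.exp (g * (u - v j)) := by
  have hJu : J u = j :=
    eq_of_isGreatest_of_le_of_lt hv (hJ u ((hv0 ▸ hv j.zero_le).trans hju)) hju huj
  linarith [le_rhs_at_jump_add_integral hv0 hv hint hineq hJu hju hut,
    add_integral_le_mul_exp_between_jumps hv0 hv hJ hg hint hx_rc hineq hju huj.le hut hB u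
      ⟨hju, le_rfl⟩]

theorem rhs_at_jump_le_prod_mul_exp (hv0 : v 0 = 0) (hv : StrictMono v)
    (hJ : ∀ s, 0 ≤ s → IsGreatest {k | v k ≤ s} (J s)) (hg : 0 ≤ g) (hc : ∀ k, 0 ≤ c k)
    (hint : ∀ p q, IntervalIntegrable x volume p q)
    (hx_rc : ∀ s, 0 ≤ s → ContinuousWithinAt x (Ici s) s)
    (hxL : ∀ k, 1 ≤ k → Tendsto x (𝓝[<] (v k)) (𝓝 (xL k)))
    (hineq : ∀ s, 0 ≤ s → s ≤ t →
      x s ≤ A + ∑ k ∈ Finset.Icc 1 (J s), c k * xL k + g * ∫ u in (0:ℝ)..s, x u) :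
    ∀ j, v j ≤ t → A + ∑ k ∈ Finset.Icc 1 j, c k * xL k + g * ∫ w in (0:ℝ)..v j, x w ≤
      A * (∏ k ∈ Finset.Icc 1 j, (1 + c k)) * Real.exp (g * v j) := by
  intro j
  induction j with
  | zero => intro; simp [hv0]
  | succ j ih =>
    intro hjt
    have hjj : v j < v (j + 1) := hv j.lt_succ_self
    set B := A * (∏ k ∈ Finset.Icc 1 j, (1 + c k)) * Real.exp (g * v j)
    have hB := ih (hjj.le.trans hjt)
    have hE : B * Real.exp (g * (v (j + 1) - v j)) =
        A * (∏ k ∈ Finset.Icc 1 j, (1 + c k)) * Real.exp (g * v (j + 1)) := by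
      rw [mul_assoc, ← Real.exp_add]; ring_nf
    have hjump : xL (j + 1) ≤ B * Real.exp (g * (v (j + 1) - v j)) := by
      refine le_of_tendsto_of_tendsto (hxL (j + 1) (by omega))
        (((by fun_prop : Continuous fun u => B * Real.exp (g * (u - v j))).tendsto _).mono_left
          nhdsWithin_le_nhds) ?_
      filter_upwards [Ioo_mem_nhdsLT hjj] with u hu
      exact le_mul_exp_between_jumps hv0 hv.monotone hJ hg hint hx_rc hineq hu.1.le hu.2
        (hu.2.le.trans hjt) hB
    have hdrift := add_integral_le_mul_exp_between_jumps hv0 hv.monotone hJ hg hint hx_rc hineq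
      hjj.le le_rfl hjt hB (v (j + 1)) ⟨hjj.le, le_rfl⟩
    rw [Finset.sum_Icc_succ_top (by omega), Finset.prod_Icc_succ_top (by omega),
      ← intervalIntegral.integral_add_adjacent_intervals (hint 0 (v j)) (hint (v j) (v (j + 1)))]
    have hprod : A * ((∏ k ∈ Finset.Icc 1 j, (1 + c k)) * (1 + c (j + 1))) *
        Real.exp (g * v (j + 1)) = B * Real.exp (g * (v (j + 1) - v j)) * (1 + c (j + 1)) := by
      rw [hE]; ring
    rw [hprod]
    linarith [mul_le_mul_of_nonneg_left hjump (hc (j + 1))]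

end JumpGronwall

theorem gronwall_with_jumps_general
    (v : ℕ → ℝ) (hv0 : v 0 = 0) (hvmono : StrictMono v)
    (J : ℝ → ℕ) (hJ : ∀ s, 0 ≤ s → IsGreatest {k | v k ≤ s} (J s))
    (A g : ℝ) (hA : 0 ≤ A) (hg : 0 ≤ g) (c : ℕ → ℝ) (hc : ∀ k, 0 ≤ c k)
    (t : ℝ) (ht : 0 ≤ t)
    (x : ℝ → ℝ)
    (hx_rc : ∀ s, 0 ≤ s → ContinuousWithinAt x (Ici s) s)
    (xL : ℕ → ℝ)
    (hxL : ∀ k, 1 ≤ k → Tendsto x (nhdsWithin (v k) (Iio (v k))) (nhds (xL k)))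
    (hInt : ∀ s, IntervalIntegrable x volume 0 s)
    (hineq : ∀ s, 0 ≤ s → s ≤ t →
      x s ≤ A + ∑ k ∈ Finset.Icc 1 (J s), c k * xL k + g * ∫ u in (0:ℝ)..s, x u) :
    (∀ s, 0 ≤ s → s ≤ t →
        x s ≤ A * Real.exp (g * t) * ∏ k ∈ Finset.Icc 1 (J t), (1 + c k)) ∧
      A * Real.exp (g * t) * ∏ k ∈ Finset.Icc 1 (J t), (1 + c k) ≤
        A * Real.exp (g * t) * Real.exp (∑ k ∈ Finset.Icc 1 (J t), c k) := by
  have hint : ∀ p q, IntervalIntegrable x volume p q := fun p q => (hInt p).symm.trans (hInt q)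
  refine ⟨fun s hs hst => ?_, by gcongr; exact Real.prod_one_add_le_exp_sum _ hc⟩
  have hJs := hJ s hs
  have hJst : J s ≤ J t := (hJ t ht).2 (hJs.1.trans hst)
  have hprod : ∏ k ∈ Finset.Icc 1 (J s), (1 + c k) ≤ ∏ k ∈ Finset.Icc 1 (J t), (1 + c k) :=
    Finset.prod_le_prod_of_subset_of_one_le (Finset.Icc_subset_Icc_right hJst)
      (fun k _ => by linarith [hc k]) (fun k _ _ => by linarith [hc k])
  calc x s ≤ A * (∏ k ∈ Finset.Icc 1 (J s), (1 + c k)) * Real.exp (g * v (J s)) *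
        Real.exp (g * (s - v (J s))) :=
      le_mul_exp_between_jumps hv0 hvmono.monotone hJ hg hint hx_rc hineq hJs.1
        (lt_succ_of_isGreatest hJs) hst
        (rhs_at_jump_le_prod_mul_exp hv0 hvmono hJ hg hc hint hx_rc hxL hineq _
          (hJs.1.trans hst))
    _ = A * Real.exp (g * s) * ∏ k ∈ Finset.Icc 1 (J s), (1 + c k) := by
      rw [mul_assoc _ (Real.exp _), ← Real.exp_add]; ring_nf
    _ ≤ A * Real.exp (g * t) * ∏ k ∈ Finset.Icc 1 (J t), (1 + c k) := by
      gcongr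
      exact Finset.prod_nonneg fun k _ => by linarith [hc k]

/-- Gronwall-type lemma with jumps: if a nonnegative càdlàg function satisfies
`x_s ≤ A + ∑_{k=1}^{J_s} c_k x_{v_k-} + g ∫_0^s x_u du` for `s ≤ t`, then
`sup_{s≤t} x_s ≤ A e^{gt} ∏_{k=1}^{J_t}(1+c_k) ≤ A e^{gt} e^{∑_{k=1}^{J_t} c_k}`. -/
theorem gronwall_with_jumps
    (v : ℕ → ℝ) (hv0 : v 0 = 0) (hvmono : StrictMono v)
    (hvtop : Tendsto v atTop atTop)
    (J : ℝ → ℕ) (hJ : ∀ s, 0 ≤ s → IsGreatest {k | v k ≤ s} (J s))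
    (A g : ℝ) (hA : 0 ≤ A) (hg : 0 ≤ g) (c : ℕ → ℝ) (hc : ∀ k, 0 ≤ c k)
    (t : ℝ) (ht : 0 ≤ t)
    (x : ℝ → ℝ) (hx_nonneg : ∀ s, 0 ≤ s → 0 ≤ x s)
    (hx_rc : ∀ s, 0 ≤ s → ContinuousWithinAt x (Ici s) s)
    (xL : ℕ → ℝ)
    (hxL : ∀ k, 1 ≤ k → Tendsto x (nhdsWithin (v k) (Iio (v k))) (nhds (xL k)))
    (hInt : ∀ s, IntervalIntegrable x volume 0 s)
    (hineq : ∀ s, 0 ≤ s → s ≤ t →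
      x s ≤ A + ∑ k ∈ Finset.Icc 1 (J s), c k * xL k + g * ∫ u in (0:ℝ)..s, x u) :
    (∀ s, 0 ≤ s → s ≤ t →
        x s ≤ A * Real.exp (g * t) * ∏ k ∈ Finset.Icc 1 (J t), (1 + c k)) ∧
      A * Real.exp (g * t) * ∏ k ∈ Finset.Icc 1 (J t), (1 + c k) ≤
        A * Real.exp (g * t) * Real.exp (∑ k ∈ Finset.Icc 1 (J t), c k) :=
  gronwall_with_jumps_general v hv0 hvmono J hJ A g hA hg c hc t ht x hx_rc xL hxL hInt hineq
end

section
/- Let $\mu=\sum_{k\geq1}k^{-\lambda}\delta_{1/k}$ on $(0,1]$ with $0<\lambda\leq1$. Then $\int_{\{a\leq u\}}a^2\,d\mu(a)=\sum_{k\geq1/u}k^{-(2+\lambda)}$ and $\lim_{u\to0^+}\frac{1}{u^{1+\lambda}}\int_{\{a\leq u\}}a^2\,d\mu(a)=\frac{1}{1+\lambda}$. Consequently, the Ishikawa–Kunita condition $\liminf_{u\to0}u^{-h}\int_{\{|a|\leq u\}}a^2\,d\mu(a)>0$ holds for $h=1+\lambda$ when $\lambda<1$ (so $h<2$), but fails for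 every $h<2$ when $\lambda=1$. -/
/-!
The measure `μ_λ` puts mass `k ^ (-λ)` at `1 / k`, so `∫_{a ≤ u} a² dμ_λ = ∑_{k ≥ 1/u} k ^ (-(2 + λ))` is a
tail of a `p`-series. By the mean value theorem, `p (n + 1) ^ (-(p + 1)) ≤ n ^ (-p) - (n + 1) ^ (-p) ≤
p n ^ (-(p + 1))`, and telescoping gives `(x + 1) ^ (-p) ≤ p ∑_{n ≥ x} n ^ (-(p + 1)) ≤ (x - 1) ^ (-p)` for
`x > 1`. With `p = 1 + λ` and `x = 1 / u` this squeezes `u ^ (-(1 + λ)) ∫_{a ≤ u} a² dμ_λ` to `1 / (1 + λ)`,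
so the Ishikawa–Kunita liminf is `1 / (1 + λ) > 0` for `h = 1 + λ`; for `h < 2 = 1 + λ` the extra factor
`u ^ (2 - h) → 0` makes it vanish.
-/

open MeasureTheory Set Filter
open scoped ENNReal

/-- The measure `μ_λ = ∑_{k≥1} k^{-λ} δ_{1/k}` on `(0,1]`. -/
noncomputable def muLam (lam : ℝ) : Measure ℝ :=
  Measure.sum fun k : ℕ =>
    ENNReal.ofReal (((k : ℝ) + 1) ^ (-lam)) • Measure.dirac (1 / ((k : ℝ) + 1))

open Real Topology

theorem hasSum_sub_succ_of_antitone {f : ℕ → ℝ} (hf : Antitone f)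
    (hlim : Tendsto f atTop (𝓝 0)) : HasSum (fun n => f n - f (n + 1)) (f 0) := by
  rw [hasSum_iff_tendsto_nat_of_nonneg (fun n => sub_nonneg.2 (hf n.le_succ))]
  simp only [Finset.sum_range_sub']
  simpa using tendsto_const_nhds.sub hlim

namespace Real

/-- Mean value theorem for `t ↦ t ^ (-p)`, whose derivative `-p t ^ (-(p + 1))` is monotone. -/
theorem rpow_neg_sub_rpow_neg_mem_Icc {p x y : ℝ} (hp : 0 < p) (hx : 0 < x) (hxy : x < y) :
    x ^ (-p) - y ^ (-p) ∈ Icc (p * y ^ (-(p + 1)) * (y - x)) (p * x ^ (-(p + 1)) * (y - x)) := by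
  have hderiv : ∀ t ∈ Ioo x y, HasDerivAt (fun t : ℝ => t ^ (-p)) (-p * t ^ (-(p + 1))) t := by
    intro t ht
    rw [show -(p + 1) = -p - 1 by ring]
    exact hasDerivAt_rpow_const (Or.inl (hx.trans ht.1).ne')
  have hcont : ContinuousOn (fun t : ℝ => t ^ (-p)) (Icc x y) := fun t ht =>
    (continuousAt_rpow_const t _ (Or.inl (hx.trans_le ht.1).ne')).continuousWithinAt
  obtain ⟨c, hc, hslope⟩ := exists_hasDerivAt_eq_slope _ _ hxy hcont hderiv
  have hdiff : x ^ (-p) - y ^ (-p) = p * c ^ (-(p + 1)) * (y - x) := by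
    field_simp [(sub_pos.2 hxy).ne'] at hslope
    linarith
  have hneg : -(p + 1) ≤ 0 := by linarith
  rw [hdiff]
  constructor
  · gcongr p * ?_ * _
    exact rpow_le_rpow_of_nonpos (hx.trans hc.1) hc.2.le hneg
  · gcongr p * ?_ * _
    exact rpow_le_rpow_of_nonpos hx hc.1.le hneg

theorem hasSum_rpow_neg_sub_succ {p a : ℝ} (hp : 0 < p) (ha : 0 < a) :
    HasSum (fun j : ℕ => (a + j) ^ (-p) - (a + j + 1) ^ (-p)) (a ^ (-p)) := by
  have hanti : Antitone fun j : ℕ => (a + j) ^ (-p) := fun i j hij =>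
    rpow_le_rpow_of_nonpos (by positivity) (by gcongr) (by linarith)
  have hlim : Tendsto (fun j : ℕ => (a + j) ^ (-p)) atTop (𝓝 0) :=
    (tendsto_rpow_neg_atTop hp).comp
      (tendsto_atTop_add_const_left _ a tendsto_natCast_atTop_atTop)
  simpa [add_assoc] using hasSum_sub_succ_of_antitone hanti hlim

theorem summable_nat_add_rpow_neg {q a : ℝ} (hq : 1 < q) (ha : 0 < a) :
    Summable fun j : ℕ => (a + j) ^ (-q) := by
  refine ((summable_one_div_nat_add_rpow a q).2 hq).congr fun j => ?_
  rw [abs_of_pos (by positivity), rpow_neg (by positivity), one_div, add_comm]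

theorem rpow_neg_le_mul_tsum_rpow_neg {p a : ℝ} (hp : 0 < p) (ha : 0 < a) :
    a ^ (-p) ≤ p * ∑' j : ℕ, (a + j) ^ (-(p + 1)) := by
  rw [← tsum_mul_left]
  refine (hasSum_rpow_neg_sub_succ hp ha).tsum_eq ▸ Summable.tsum_le_tsum (fun j => ?_)
    (hasSum_rpow_neg_sub_succ hp ha).summable
    ((summable_nat_add_rpow_neg (by linarith) ha).mul_left p)
  simpa using (rpow_neg_sub_rpow_neg_mem_Icc hp (by positivity : 0 < a + j)
    (lt_add_one (a + j))).2

theorem mul_tsum_rpow_neg_le {p a : ℝ} (hp : 0 < p) (ha : 1 < a) :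
    p * ∑' j : ℕ, (a + j) ^ (-(p + 1)) ≤ (a - 1) ^ (-p) := by
  have ha' : 0 < a - 1 := by linarith
  rw [← tsum_mul_left]
  refine (hasSum_rpow_neg_sub_succ hp ha').tsum_eq ▸ Summable.tsum_le_tsum (fun j => ?_)
    ((summable_nat_add_rpow_neg (by linarith) (by linarith)).mul_left p)
    (hasSum_rpow_neg_sub_succ hp ha').summable
  have h := (rpow_neg_sub_rpow_neg_mem_Icc hp (by positivity : 0 < a - 1 + j)
    (lt_add_one (a - 1 + j))).1
  rw [show a - 1 + j + 1 = a + j by ring] at h ⊢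
  rwa [show a + j - (a - 1 + j) = 1 by ring, mul_one] at h

end Real

/-- `powTail q x = ∑_{n ≥ x} n ^ (-q)` over integers `n = k + 1 ≥ 1`. -/
noncomputable def powTail (q x : ℝ) : ℝ :=
  ∑' k : ℕ, if x ≤ (k : ℝ) + 1 then ((k : ℝ) + 1) ^ (-q) else 0

theorem powTail_eq_tsum_ceil_add {q x : ℝ} (hq : 1 < q) (hx : 0 < x) :
    powTail q x = ∑' j : ℕ, ((⌈x⌉₊ : ℝ) + j) ^ (-q) := by
  have hN : 1 ≤ ⌈x⌉₊ := Nat.ceil_pos.2 hx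
  have hle : ∀ k : ℕ, x ≤ (k : ℝ) + 1 ↔ ⌈x⌉₊ - 1 ≤ k := fun k => by
    rw [Nat.sub_le_iff_le_add, Nat.ceil_le]; push_cast; rfl
  simp_rw [powTail, hle]
  refine ((hasSum_nat_add_iff' (⌈x⌉₊ - 1)).1 ?_).tsum_eq
  rw [Finset.sum_eq_zero fun i hi => if_neg (not_le.2 (Finset.mem_range.1 hi)), sub_zero]
  simp only [le_add_self, if_true]
  refine (summable_nat_add_rpow_neg hq (by positivity : (0 : ℝ) < ⌈x⌉₊)).hasSum.congr_fun
    fun j => ?_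
  rw [Nat.cast_add, Nat.cast_sub hN]
  push_cast
  congr 1
  ring

theorem mul_powTail_mem_Icc {p x : ℝ} (hp : 0 < p) (hx : 1 < x) :
    p * powTail (p + 1) x ∈ Icc ((x + 1) ^ (-p)) ((x - 1) ^ (-p)) := by
  rw [powTail_eq_tsum_ceil_add (by linarith) (by linarith)]
  have hxN : x ≤ ⌈x⌉₊ := Nat.le_ceil x
  have hNx : (⌈x⌉₊ : ℝ) < x + 1 := Nat.ceil_lt_add_one (by linarith)
  exact ⟨(rpow_le_rpow_of_nonpos (by linarith) hNx.le (by linarith)).trans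
      (rpow_neg_le_mul_tsum_rpow_neg hp (by linarith)),
    (mul_tsum_rpow_neg_le hp (by linarith)).trans
      (rpow_le_rpow_of_nonpos (by linarith) (by linarith) (by linarith))⟩

theorem tendsto_rpow_neg_mul_powTail {p : ℝ} (hp : 0 < p) :
    Tendsto (fun u => u ^ (-p) * powTail (p + 1) (1 / u)) (𝓝[>] 0) (𝓝 (1 / p)) := by
  have hlim : ∀ c : ℝ, Tendsto (fun u => (1 + c * u) ^ (-p) / p) (𝓝[>] 0) (𝓝 (1 / p)) := by
    intro c
    have h : Tendsto (fun u : ℝ => 1 + c * u) (𝓝[>] 0) (𝓝 1) :=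
      tendsto_nhdsWithin_of_tendsto_nhds ((by fun_prop : Continuous fun u : ℝ => 1 + c * u).tendsto'
        0 1 (by simp))
    simpa using (h.rpow_const (Or.inl one_ne_zero)).div_const p
  have hscale : ∀ c u : ℝ, 0 < u → 0 < 1 / u + c →
      u ^ (-p) * (1 / u + c) ^ (-p) = (1 + c * u) ^ (-p) := fun c u hu hc => by
    rw [← mul_rpow hu.le hc.le]
    congr 1
    field_simp
  refine tendsto_of_tendsto_of_tendsto_of_le_of_le' (hlim 1) (hlim (-1)) ?_ ?_ <;>
    filter_upwards [Ioo_mem_nhdsGT one_pos] with u ⟨hu0, hu1⟩ <;>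
    obtain ⟨hlow, hup⟩ := mul_powTail_mem_Icc hp (one_lt_one_div hu0 hu1)
  · rw [div_le_iff₀ hp, ← hscale 1 u hu0 (by positivity), mul_assoc, mul_comm _ p]
    exact mul_le_mul_of_nonneg_left hlow (by positivity)
  · rw [sub_eq_add_neg] at hup
    rw [le_div_iff₀ hp, ← hscale (-1) u hu0 (by linarith [one_lt_one_div hu0 hu1]), mul_assoc,
      mul_comm _ p]
    exact mul_le_mul_of_nonneg_left hup (by positivity)

theorem tendsto_rpow_neg_mul_of_lt {g : ℝ → ℝ} {h p L : ℝ} (hhp : h < p)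
    (hg : Tendsto (fun u => u ^ (-p) * g u) (𝓝[>] 0) (𝓝 L)) :
    Tendsto (fun u => u ^ (-h) * g u) (𝓝[>] 0) (𝓝 0) := by
  have hpow : Tendsto (fun u : ℝ => u ^ (p - h)) (𝓝[>] 0) (𝓝 0) := by
    simpa [zero_rpow (sub_pos.2 hhp).ne'] using
      ((continuousAt_rpow_const 0 _ (Or.inr (sub_pos.2 hhp).le)).tendsto).mono_left
        nhdsWithin_le_nhds
  have hprod := hpow.mul hg
  rw [zero_mul] at hprod
  refine hprod.congr' ?_
  filter_upwards [self_mem_nhdsWithin] with u (hu : 0 < u)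
  rw [← mul_assoc, ← rpow_add hu, show p - h + -p = -h by ring]

theorem lintegral_muLam (lam : ℝ) (f : ℝ → ℝ≥0∞) :
    ∫⁻ a, f a ∂muLam lam =
      ∑' k : ℕ, ENNReal.ofReal (((k : ℝ) + 1) ^ (-lam)) * f (1 / ((k : ℝ) + 1)) := by
  simp [muLam, lintegral_sum_measure, lintegral_smul_measure, lintegral_dirac]

theorem toReal_setLIntegral_sq_muLam (lam : ℝ) {S : Set ℝ} {x : ℝ} (hS : MeasurableSet S)
    (hmem : ∀ k : ℕ, 1 / ((k : ℝ) + 1) ∈ S ↔ x ≤ (k : ℝ) + 1) :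
    (∫⁻ a in S, ENNReal.ofReal (a ^ 2) ∂muLam lam).toReal = powTail (2 + lam) x := by
  have hterm : ∀ k : ℕ, ENNReal.ofReal (((k : ℝ) + 1) ^ (-lam)) *
      S.indicator (fun a => ENNReal.ofReal (a ^ 2)) (1 / ((k : ℝ) + 1)) =
      ENNReal.ofReal (if x ≤ (k : ℝ) + 1 then ((k : ℝ) + 1) ^ (-(2 + lam)) else 0) := by
    classical
    intro k
    have hk : (0 : ℝ) < k + 1 := by positivity
    rw [indicator_apply, if_congr (hmem k) rfl rfl]
    split_ifs
    · rw [← ENNReal.ofReal_mul (by positivity), one_div, inv_pow, ← rpow_natCast,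
        ← rpow_neg hk.le, ← rpow_add hk]
      norm_num [add_comm]
    · simp
  rw [← lintegral_indicator hS, lintegral_muLam, tsum_congr hterm,
    ENNReal.tsum_toReal_eq fun _ => ENNReal.ofReal_ne_top]
  exact tsum_congr fun k => ENNReal.toReal_ofReal (by split_ifs <;> positivity)

theorem ishikawa_kunita_example_general (lam : ℝ) (h0 : 0 < lam) :
    (∀ u : ℝ, 0 < u → u ≤ 1 →
        (∫⁻ a in {a : ℝ | a ≤ u}, ENNReal.ofReal (a ^ 2) ∂(muLam lam)).toReal =
          ∑' k : ℕ, if 1 / u ≤ (k : ℝ) + 1 then ((k : ℝ) + 1) ^ (-(2 + lam)) else 0) ∧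
      Tendsto
        (fun u : ℝ => (1 / u ^ (1 + lam)) *
          (∫⁻ a in {a : ℝ | a ≤ u}, ENNReal.ofReal (a ^ 2) ∂(muLam lam)).toReal)
        (nhdsWithin 0 (Ioi 0)) (nhds (1 / (1 + lam))) ∧
      (lam < 1 →
        0 < liminf
          (fun u : ℝ => u ^ (-(1 + lam)) *
            (∫⁻ a in {a : ℝ | |a| ≤ u}, ENNReal.ofReal (a ^ 2) ∂(muLam lam)).toReal)
          (nhdsWithin 0 (Ioi 0))) ∧
      (lam = 1 → ∀ h : ℝ, h < 2 →
        ¬ 0 < liminf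
          (fun u : ℝ => u ^ (-h) *
            (∫⁻ a in {a : ℝ | |a| ≤ u}, ENNReal.ofReal (a ^ 2) ∂(muLam lam)).toReal)
          (nhdsWithin 0 (Ioi 0))) := by
  have hle : ∀ u, 0 < u → (∫⁻ a in {a : ℝ | a ≤ u}, ENNReal.ofReal (a ^ 2) ∂(muLam lam)).toReal =
      powTail (2 + lam) (1 / u) := fun u hu =>
    toReal_setLIntegral_sq_muLam lam measurableSet_Iic fun k => one_div_le (by positivity) hu
  have habs : ∀ u, 0 < u →
      (∫⁻ a in {a : ℝ | |a| ≤ u}, ENNReal.ofReal (a ^ 2) ∂(muLam lam)).toReal =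
        powTail (2 + lam) (1 / u) := fun u hu =>
    toReal_setLIntegral_sq_muLam lam (measurableSet_le measurable_abs measurable_const) fun k => by
      rw [mem_ofPred_eq, abs_of_pos (by positivity), one_div_le (by positivity) hu]
  have hlim : Tendsto (fun u => u ^ (-(1 + lam)) * powTail (2 + lam) (1 / u)) (𝓝[>] 0)
      (𝓝 (1 / (1 + lam))) := by
    simpa only [show 1 + lam + 1 = 2 + lam by ring] using tendsto_rpow_neg_mul_powTail
      (p := 1 + lam) (by linarith)
  have hlimAbs : Tendsto (fun u => u ^ (-(1 + lam)) *
      (∫⁻ a in {a : ℝ | |a| ≤ u}, ENNReal.ofReal (a ^ 2) ∂(muLam lam)).toReal) (𝓝[>] 0)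
      (𝓝 (1 / (1 + lam))) :=
    hlim.congr' <| eventually_nhdsWithin_of_forall fun u hu => by dsimp only; rw [habs u hu]
  refine ⟨fun u hu _ => hle u hu, ?_, fun _ => ?_, fun hlam h hh => ?_⟩
  · refine hlim.congr' <| eventually_nhdsWithin_of_forall fun u (hu : 0 < u) => ?_
    dsimp only
    rw [hle u hu, rpow_neg hu.le, ← one_div]
  · rw [hlimAbs.liminf_eq]
    positivity
  · rw [(tendsto_rpow_neg_mul_of_lt (by linarith) hlimAbs).liminf_eq]
    exact lt_irrefl 0

/-- Example 2 of the paper: for `μ = ∑_k k^{-λ} δ_{1/k}`, `0 < λ ≤ 1`, the truncated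
second moment `∫_{a≤u} a² dμ` equals `∑_{k ≥ 1/u} k^{-(2+λ)}`, satisfies
`u^{-(1+λ)} ∫_{a≤u} a² dμ → 1/(1+λ)` as `u → 0⁺`, so the Ishikawa–Kunita condition
`liminf_{u→0} u^{-h} ∫_{|a|≤u} a² dμ > 0` holds with `h = 1+λ < 2` when `λ < 1`,
but fails for every `h < 2` when `λ = 1`. -/
theorem ishikawa_kunita_example (lam : ℝ) (h0 : 0 < lam) (h1 : lam ≤ 1) :
    (∀ u : ℝ, 0 < u → u ≤ 1 →
        (∫⁻ a in {a : ℝ | a ≤ u}, ENNReal.ofReal (a ^ 2) ∂(muLam lam)).toReal =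
          ∑' k : ℕ, if 1 / u ≤ (k : ℝ) + 1 then ((k : ℝ) + 1) ^ (-(2 + lam)) else 0) ∧
      Tendsto
        (fun u : ℝ => (1 / u ^ (1 + lam)) *
          (∫⁻ a in {a : ℝ | a ≤ u}, ENNReal.ofReal (a ^ 2) ∂(muLam lam)).toReal)
        (nhdsWithin 0 (Ioi 0)) (nhds (1 / (1 + lam))) ∧
      (lam < 1 →
        0 < liminf
          (fun u : ℝ => u ^ (-(1 + lam)) *
            (∫⁻ a in {a : ℝ | |a| ≤ u}, ENNReal.ofReal (a ^ 2) ∂(muLam lam)).toReal)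
          (nhdsWithin 0 (Ioi 0))) ∧
      (lam = 1 → ∀ h : ℝ, h < 2 →
        ¬ 0 < liminf
          (fun u : ℝ => u ^ (-h) *
            (∫⁻ a in {a : ℝ | |a| ≤ u}, ENNReal.ofReal (a ^ 2) ∂(muLam lam)).toReal)
          (nhdsWithin 0 (Ioi 0))) :=
  ishikawa_kunita_example_general lam h0
end
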